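/- Let f ∈ ℚ[x_1,…,x_n] be a degree-d form with h(f) = h, satisfying f = (x_1 + ℓ_1) v_1 + … + (x_M + ℓ_M) v_M + u_{M+1} v_{M+1} + … + u_h v_h, where each ℓ_i is a rational linear form in x_{M+1},…,x_n only and all u_{i'}, v_j are rational forms of positive degree. Then h(f(−ℓ_1,…,−ℓ_M, x_{M+1},…,x_n)) = h − M, where f(−ℓ_1,…,−ℓ_M, x_{M+1},…,x_n) ∈ ℚ[x_{M+1},…,x_n] is obtained by substituting x_i = −ℓ_i for 1 ≤ i ≤ M. -/

import Mathlib

open MvPolynomial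

/-- The h-invariant (rational Schmidt rank) of a polynomial `f`: the least `h` such that
`f = ∑_{i=1}^h U_i V_i` with all `U_i, V_i` rational forms of positive degree. -/
noncomputable def hInv {n : ℕ} (f : MvPolynomial (Fin n) ℚ) : ℕ :=
  sInf {h : ℕ | ∃ U V : Fin h → MvPolynomial (Fin n) ℚ,
    (∀ i, ∃ d, 0 < d ∧ (U i).IsHomogeneous d) ∧
    (∀ i, ∃ d, 0 < d ∧ (V i).IsHomogeneous d) ∧
    f = ∑ i, U i * V i}

/-! Substituting `x_i = -ℓ_i` annihilates the first `M` products `(x_i + ℓ_i) v_i` and maps forms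
to forms of the same degree, so `h(g) ≤ h - M` for the substituted form `g`. Conversely, the
substitution is the identity modulo the ideal `I = (x_1 + ℓ_1, …, x_M + ℓ_M)`, so `f - g ∈ I`.
As `f - g` is a form of degree `d` and the generators of `I` are linear, taking the degree `d - 1`
components of the cofactors gives `f = ∑ (x_i + ℓ_i) c_i + g` with forms `c_i` of degree
`d - 1`; this is positive because a nonzero sum of products of forms of positive degree has
degree at least `2`. Hence `h ≤ M + h(g)`. -/

open Finset

namespace MvPolynomial

variable {σ R : Type*}

section CommSemiring

variable [CommSemiring R]

lemma aeval_eq_self_of_forall_mem_vars {τ : σ → MvPolynomial σ R} {p : MvPolynomial σ R}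
    (h : ∀ i ∈ p.vars, τ i = X i) : aeval τ p = p := by
  simpa using hom_congr_vars (f₁ := (aeval τ).toRingHom) (f₂ := RingHom.id _)
    (by ext; simp [algebraMap_eq]) (fun i hi _ => by simp [h i hi]) rfl

attribute [local instance] MvPolynomial.gradedAlgebra in
lemma IsHomogeneous.homogeneousComponent_add_mul {a : MvPolynomial σ R} {k : ℕ}
    (ha : a.IsHomogeneous k) (b : MvPolynomial σ R) (d : ℕ) :
    homogeneousComponent (k + d) (a * b) = a * homogeneousComponent d b := by
  have := DirectSum.coe_decompose_mul_of_left_mem_of_le (homogeneousSubmodule σ R) (b := b)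
    (n := k + d) ha (Nat.le_add_right k d)
  rw [Nat.add_sub_cancel_left] at this
  rw [← decomposition.decompose'_apply, ← decomposition.decompose'_apply]
  exact this

lemma exists_isHomogeneous_cofactors_of_mem_span {ι : Type*} [Fintype ι]
    {a : ι → MvPolynomial σ R} {k d : ℕ} (ha : ∀ i, (a i).IsHomogeneous k)
    {p : MvPolynomial σ R} (hp : p.IsHomogeneous (k + d)) (hmem : p ∈ Ideal.span (Set.range a)) :
    ∃ c : ι → MvPolynomial σ R, (∀ i, (c i).IsHomogeneous d) ∧ p = ∑ i, a i * c i := by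
  obtain ⟨c, rfl⟩ := Ideal.mem_span_range_iff_exists_fun.mp hmem
  refine ⟨fun i => homogeneousComponent d (c i),
    fun i => homogeneousComponent_isHomogeneous _ _, ?_⟩
  conv_lhs => rw [← homogeneousComponent_eq_self hp]
  simp only [map_sum, mul_comm (c _), (ha _).homogeneousComponent_add_mul]

end CommSemiring

lemma sub_aeval_mem_of_forall_X_sub_mem [CommRing R] {I : Ideal (MvPolynomial σ R)}
    {τ : σ → MvPolynomial σ R} (hτ : ∀ i, X i - τ i ∈ I) (p : MvPolynomial σ R) :
    p - aeval τ p ∈ I := by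
  rw [← Ideal.Quotient.eq]
  have hcomp : (Ideal.Quotient.mkₐ R I).comp (aeval τ) = Ideal.Quotient.mkₐ R I :=
    algHom_ext fun i => by simpa [Ideal.Quotient.eq] using I.neg_mem (hτ i)
  exact (DFunLike.congr_fun hcomp p).symm

end MvPolynomial

lemma Fin.card_filter_le_val (n m : ℕ) :
    (univ.filter fun i : Fin n => m ≤ (i : ℕ)).card = n - m := by
  have := card_filter_add_card_filter_not (s := univ) (fun i : Fin n => (i : ℕ) < m)
  simp only [not_lt, Fin.card_filter_val_lt, card_univ, Fintype.card_fin] at this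
  omega

def IsSumOfFormProducts {σ R : Type*} [CommSemiring R] (k : ℕ) (f : MvPolynomial σ R) : Prop :=
  ∃ U V : Fin k → MvPolynomial σ R,
    (∀ i, ∃ d, 0 < d ∧ (U i).IsHomogeneous d) ∧
    (∀ i, ∃ d, 0 < d ∧ (V i).IsHomogeneous d) ∧
    f = ∑ i, U i * V i

namespace IsSumOfFormProducts

variable {σ R : Type*} [CommSemiring R]

lemma finset_sum {ι : Type*} (t : Finset ι) {U V : ι → MvPolynomial σ R}
    (hU : ∀ i ∈ t, ∃ d, 0 < d ∧ (U i).IsHomogeneous d)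
    (hV : ∀ i ∈ t, ∃ d, 0 < d ∧ (V i).IsHomogeneous d) :
    IsSumOfFormProducts t.card (∑ i ∈ t, U i * V i) := by
  let e := t.equivFin
  refine ⟨fun j => U (e.symm j), fun j => V (e.symm j), fun j => hU _ (e.symm j).2,
    fun j => hV _ (e.symm j).2, ?_⟩
  rw [← sum_coe_sort t]
  exact (e.symm.sum_comp fun i => U i * V i).symm

lemma add {k m : ℕ} {f g : MvPolynomial σ R} (hf : IsSumOfFormProducts k f)
    (hg : IsSumOfFormProducts m g) : IsSumOfFormProducts (k + m) (f + g) := by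
  obtain ⟨U, V, hU, hV, rfl⟩ := hf
  obtain ⟨U', V', hU', hV', rfl⟩ := hg
  refine ⟨Fin.append U U', Fin.append V V',
    Fin.addCases (by simpa using hU) (by simpa using hU'),
    Fin.addCases (by simpa using hV) (by simpa using hV'), ?_⟩
  simp [Fin.sum_univ_add]

lemma two_le_of_isHomogeneous {k d : ℕ} {f : MvPolynomial σ R} (hf : IsSumOfFormProducts k f)
    (hd : f.IsHomogeneous d) (hf0 : f ≠ 0) : 2 ≤ d := by
  obtain ⟨U, V, hU, hV, rfl⟩ := hf
  by_contra! hd2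
  refine hf0 ?_
  rw [← homogeneousComponent_eq_self hd, map_sum]
  refine sum_eq_zero fun i _ => ?_
  obtain ⟨a, ha, hUa⟩ := hU i
  obtain ⟨b, hb, hVb⟩ := hV i
  rw [homogeneousComponent_of_mem (hUa.mul hVb), if_neg (by omega)]

end IsSumOfFormProducts

section hInv

variable {n k : ℕ} {f : MvPolynomial (Fin n) ℚ}

lemma hInv_le (hf : IsSumOfFormProducts k f) : hInv f ≤ k :=
  Nat.sInf_le hf

lemma isSumOfFormProducts_hInv (hf : IsSumOfFormProducts k f) :
    IsSumOfFormProducts (hInv f) f :=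
  Nat.sInf_mem (s := {k | IsSumOfFormProducts k f}) ⟨k, hf⟩

lemma isSumOfFormProducts_hInv_of_pos (hf : 0 < hInv f) : IsSumOfFormProducts (hInv f) f :=
  Nat.sInf_mem (Nat.nonempty_of_pos_sInf hf)

lemma hInv_zero : hInv (0 : MvPolynomial (Fin n) ℚ) = 0 :=
  Nat.le_zero.mp <| hInv_le ⟨finZeroElim, finZeroElim, finZeroElim, finZeroElim, by simp⟩

lemma two_le_of_hInv_pos {d : ℕ} (hf : f.IsHomogeneous d) (hpos : 0 < hInv f) : 2 ≤ d :=
  (isSumOfFormProducts_hInv_of_pos hpos).two_le_of_isHomogeneous hf <| by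
    rintro rfl
    simp [hInv_zero] at hpos

end hInv

section NegSubst

variable {R : Type*} [CommRing R] {n M : ℕ}

noncomputable def negSubst (ℓ : Fin M → MvPolynomial (Fin n) R) :
    Fin n → MvPolynomial (Fin n) R :=
  fun j => if hj : (j : ℕ) < M then -ℓ ⟨(j : ℕ), hj⟩ else X j

variable {ℓ : Fin M → MvPolynomial (Fin n) R}

lemma isHomogeneous_negSubst (hℓ : ∀ i, (ℓ i).IsHomogeneous 1) (j : Fin n) :
    (negSubst ℓ j).IsHomogeneous 1 := by
  by_cases hj : (j : ℕ) < M
  · simpa [negSubst, hj] using (hℓ _).neg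
  · simpa [negSubst, hj] using isHomogeneous_X R j

lemma aeval_negSubst_eq_self {p : MvPolynomial (Fin n) R} (hp : ∀ j ∈ p.vars, M ≤ (j : ℕ)) :
    aeval (negSubst ℓ) p = p :=
  aeval_eq_self_of_forall_mem_vars fun j hj => dif_neg (not_lt.2 (hp j hj))

lemma aeval_negSubst_X_add (hMn : M ≤ n) (hℓ : ∀ i, ∀ j ∈ (ℓ i).vars, M ≤ (j : ℕ))
    (i : Fin M) : aeval (negSubst ℓ) (X (Fin.castLE hMn i) + ℓ i) = 0 := by
  rw [map_add, aeval_X, aeval_negSubst_eq_self (hℓ i)]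
  simp [negSubst]

lemma X_sub_negSubst_mem_span (hMn : M ≤ n) (j : Fin n) :
    X j - negSubst ℓ j ∈
      Ideal.span (Set.range fun i : Fin M => X (Fin.castLE hMn i) + ℓ i) := by
  by_cases hj : (j : ℕ) < M
  · rw [negSubst, dif_pos hj, sub_neg_eq_add]
    exact Ideal.subset_span ⟨⟨j, hj⟩, rfl⟩
  · simp [negSubst, hj]

lemma isSumOfFormProducts_aeval_negSubst {h : ℕ} (hMn : M ≤ n)
    (hℓ : ∀ i, (ℓ i).IsHomogeneous 1) (hℓM : ∀ i, ∀ j ∈ (ℓ i).vars, M ≤ (j : ℕ))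
    (u v : Fin h → MvPolynomial (Fin n) R)
    (hu1 : ∀ (i : Fin h) (hi : (i : ℕ) < M),
      u i = X ⟨(i : ℕ), lt_of_lt_of_le hi hMn⟩ + ℓ ⟨(i : ℕ), hi⟩)
    (hu : ∀ i : Fin h, M ≤ (i : ℕ) → ∃ e, 0 < e ∧ (u i).IsHomogeneous e)
    (hv : ∀ i, ∃ e, 0 < e ∧ (v i).IsHomogeneous e) :
    IsSumOfFormProducts (h - M) (aeval (negSubst ℓ) (∑ i, u i * v i)) := by
  have hu0 : ∀ i : Fin h, (i : ℕ) < M → aeval (negSubst ℓ) (u i) = 0 := fun i hi => by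
    rw [hu1 i hi]
    exact aeval_negSubst_X_add hMn hℓM ⟨i, hi⟩
  have hsum : aeval (negSubst ℓ) (∑ i, u i * v i) =
      ∑ i ∈ univ.filter fun i : Fin h => M ≤ (i : ℕ),
        aeval (negSubst ℓ) (u i) * aeval (negSubst ℓ) (v i) := by
    rw [sum_filter_of_ne fun i _ hne => not_lt.1 fun hi => hne (by rw [hu0 i hi, zero_mul]),
      map_sum]
    simp only [map_mul]
  rw [hsum, ← Fin.card_filter_le_val h M]
  refine IsSumOfFormProducts.finset_sum _ (fun i hi => ?_) (fun i _ => ?_)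
  · obtain ⟨e, he, hue⟩ := hu i (mem_filter.1 hi).2
    exact ⟨e, he, by simpa using hue.aeval _ (isHomogeneous_negSubst hℓ)⟩
  · obtain ⟨e, he, hve⟩ := hv i
    exact ⟨e, he, by simpa using hve.aeval _ (isHomogeneous_negSubst hℓ)⟩

lemma IsSumOfFormProducts.of_aeval_negSubst {k d : ℕ} (hMn : M ≤ n)
    (hℓ : ∀ i, (ℓ i).IsHomogeneous 1) {f : MvPolynomial (Fin n) R} (hf : f.IsHomogeneous d)
    (hd : 2 ≤ d) (hg : IsSumOfFormProducts k (aeval (negSubst ℓ) f)) :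
    IsSumOfFormProducts (M + k) f := by
  obtain ⟨e, rfl⟩ : ∃ e, d = 1 + (e + 1) := ⟨d - 2, by omega⟩
  have ha : ∀ i : Fin M, (X (Fin.castLE hMn i) + ℓ i).IsHomogeneous 1 := fun i =>
    (isHomogeneous_X R _).add (hℓ i)
  obtain ⟨c, hc, hfc⟩ := exists_isHomogeneous_cofactors_of_mem_span ha
    (hf.sub (by simpa using hf.aeval _ (isHomogeneous_negSubst hℓ)))
    (sub_aeval_mem_of_forall_X_sub_mem (X_sub_negSubst_mem_span hMn) f)
  have := (IsSumOfFormProducts.finset_sum univ (fun i _ => ⟨1, one_pos, ha i⟩)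
    (fun i _ => ⟨e + 1, e.succ_pos, hc i⟩)).add hg
  rwa [card_univ, Fintype.card_fin, ← hfc, sub_add_cancel] at this

end NegSubst

theorem stmt4 {n d h M : ℕ} (hM : 1 ≤ M) (hMh : M ≤ h) (hMn : M ≤ n)
    (f : MvPolynomial (Fin n) ℚ) (hf : f.IsHomogeneous d) (hfh : hInv f = h)
    (ℓ : Fin M → MvPolynomial (Fin n) ℚ)
    (hℓ : ∀ i, (ℓ i).IsHomogeneous 1 ∧ ∀ j ∈ (ℓ i).vars, M ≤ (j : ℕ))
    (u v : Fin h → MvPolynomial (Fin n) ℚ)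
    (hu1 : ∀ (i : Fin h) (hi : (i : ℕ) < M),
      u i = X ⟨(i : ℕ), lt_of_lt_of_le hi hMn⟩ + ℓ ⟨(i : ℕ), hi⟩)
    (hu : ∀ i : Fin h, M ≤ (i : ℕ) → ∃ e, 0 < e ∧ (u i).IsHomogeneous e)
    (hv : ∀ i, ∃ e, 0 < e ∧ (v i).IsHomogeneous e)
    (hsum : f = ∑ i, u i * v i) :
    hInv (aeval (fun j : Fin n =>
      if hj : (j : ℕ) < M then -ℓ ⟨(j : ℕ), hj⟩ else X j) f) = h - M := by
  change hInv (aeval (negSubst ℓ) f) = h - M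
  have hg : IsSumOfFormProducts (h - M) (aeval (negSubst ℓ) f) := hsum ▸
    isSumOfFormProducts_aeval_negSubst hMn (fun i => (hℓ i).1) (fun i => (hℓ i).2) u v hu1 hu hv
  have hd : 2 ≤ d := two_le_of_hInv_pos hf (by omega)
  have hlower := hInv_le
    ((isSumOfFormProducts_hInv hg).of_aeval_negSubst hMn (fun i => (hℓ i).1) hf hd)
  have hupper := hInv_le hg
  omega
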